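/- (Increasing the number of G-SIBs increases the market failure probability.) Fix ε > 0. Then P(|τ_i − τ_j| < ε for some pair (i,j) with 1 ≤ i, j ≤ K, i ≠ j) < P(|τ_i − τ_j| < ε for some pair (i,j) with 1 ≤ i, j ≤ K+1, i ≠ j); i.e., adding a (K+1)-st G-SIB, with the intensities α_0, α_1, …, α_K and the new bank's intensity α_{K+1} fixed, strictly increases the probability of a market failure. -/

import Mathlib

/-!
Adding a bank can only enlarge the market-failure event, so it suffices to find an event of
positive probability on which the `K + 1` banks fail while the first `K` do not. Place every
stress time `η_k` in a window `[2 n_k ε, 2 n_k ε + ε / 2]`: banks `1, …, K` in the distinct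
slots `n_k = k`, the new bank in the slot of bank `1`, and the market stress in slot `K + 1`,
after all banks, so that `τ_k = η_k`. Then banks `1` and `K + 1` default less than `ε` apart,
while any two of the first `K` are at least `ε` apart. Since each `A_k` is strictly increasing, `η_k` lies in a
given window as soon as `Z_k` lies in a nondegenerate interval, which has positive exponential
probability; by independence the intersection of these events has positive probability.
-/

open MeasureTheory ProbabilityTheory Set

/-- The cumulative hazard `A(t) = ∫_0^t α(s) ds`. -/
noncomputable def cumHaz (α : ℝ → ℝ) (t : ℝ) : ℝ := ∫ s in (0:ℝ)..t, α s

/-- The first time `s ≥ 0` at which the cumulative hazard reaches level `z`,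
i.e. `inf {s ≥ 0 : A(s) ≥ z}`. -/
noncomputable def hitTime (α : ℝ → ℝ) (z : ℝ) : ℝ :=
  sInf {s : ℝ | 0 ≤ s ∧ z ≤ cumHaz α s}

def IsMarketFailure {ι : Type*} (τ : ι → ℝ) (ε : ℝ) : Prop :=
  ∃ i j, i ≠ j ∧ |τ i - τ j| < ε

lemma IsMarketFailure.of_comp {ι κ : Type*} {τ : ι → ℝ} {ε : ℝ} {f : κ → ι}
    (hf : Function.Injective f) (h : IsMarketFailure (τ ∘ f) ε) : IsMarketFailure τ ε := by
  obtain ⟨i, j, hij, hlt⟩ := h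
  exact ⟨f i, f j, hf.ne hij, hlt⟩

section cumHaz

variable {α : ℝ → ℝ}

lemma cumHaz_nonneg (hpos : ∀ t, 0 ≤ t → 0 < α t) {t : ℝ} (ht : 0 ≤ t) : 0 ≤ cumHaz α t :=
  intervalIntegral.integral_nonneg ht fun s hs => (hpos s hs.1).le

lemma cumHaz_strictMonoOn (hcont : ContinuousOn α (Ici 0)) (hpos : ∀ t, 0 ≤ t → 0 < α t) :
    StrictMonoOn (cumHaz α) (Ici 0) := by
  intro a (ha : 0 ≤ a) b (hb : 0 ≤ b) hab
  have hint : ∀ c, 0 ≤ c → IntervalIntegrable α volume 0 c := fun c hc =>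
    (hcont.mono fun s hs => (uIcc_of_le hc ▸ hs).1).intervalIntegrable
  have hdiff : cumHaz α b - cumHaz α a = ∫ s in a..b, α s :=
    intervalIntegral.integral_interval_sub_left (hint b hb) (hint a ha)
  have hpos_int : 0 < ∫ s in a..b, α s :=
    intervalIntegral.intervalIntegral_pos_of_pos_on
      (((hint a ha).symm).trans (hint b hb)) (fun s hs => hpos s (ha.trans hs.1.le)) hab
  linarith

lemma hitTime_mem_Icc (hA : MonotoneOn (cumHaz α) (Ici 0)) {a b z : ℝ} (ha : 0 ≤ a)
    (hab : a ≤ b) (hz : z ∈ Ioc (cumHaz α a) (cumHaz α b)) : hitTime α z ∈ Icc a b := by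
  have hb : b ∈ {s : ℝ | 0 ≤ s ∧ z ≤ cumHaz α s} := ⟨ha.trans hab, hz.2⟩
  refine ⟨le_csInf ⟨b, hb⟩ fun s ⟨hs, hzs⟩ => ?_, csInf_le ⟨0, fun s hs => hs.1⟩ hb⟩
  by_contra! hsa
  exact (hzs.trans (hA hs ha hsa.le)).not_gt hz.1

end cumHaz

lemma measure_preimage_Ioc_ne_zero_of_exp_tail {Ω : Type*} [MeasurableSpace Ω]
    {P : Measure Ω} {Z : Ω → ℝ} (hZ : ∀ t : ℝ, 0 ≤ t → P {ω | t < Z ω} = ENNReal.ofReal (Real.exp (-t)))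
    {x y : ℝ} (hx : 0 ≤ x) (hxy : x < y) : P (Z ⁻¹' Ioc x y) ≠ 0 := by
  intro h0
  have hsub : {ω | x < Z ω} ⊆ Z ⁻¹' Ioc x y ∪ {ω | y < Z ω} := fun ω hω =>
    (le_or_gt (Z ω) y).imp (fun h => ⟨hω, h⟩) id
  have hle := (measure_mono (μ := P) hsub).trans (measure_union_le _ _)
  rw [h0, zero_add, hZ x hx, hZ y (hx.trans hxy.le),
    ENNReal.ofReal_le_ofReal_iff (Real.exp_pos _).le, Real.exp_le_exp] at hle
  linarith

lemma ProbabilityTheory.iIndepFun.measure_iInter_preimage_ne_zero {Ω ι : Type*}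
    [MeasurableSpace Ω] [Fintype ι] {P : Measure Ω} {Z : ι → Ω → ℝ} (hZ : iIndepFun Z P) {S : ι → Set ℝ}
    (hS : ∀ i, MeasurableSet (S i)) (hne : ∀ i, P (Z i ⁻¹' S i) ≠ 0) :
    P (⋂ i, Z i ⁻¹' S i) ≠ 0 := by
  rw [hZ.meas_iInter fun i => ⟨S i, hS i, rfl⟩]
  exact Finset.prod_ne_zero_iff.mpr fun i _ => hne i

section slotWindow

variable {ε : ℝ}

def slotWindow (ε : ℝ) (n : ℕ) : Set ℝ := Icc (2 * n * ε) (2 * n * ε + ε / 2)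

lemma le_of_mem_slotWindow_of_lt (hε : 0 ≤ ε) {m n : ℕ} {s t : ℝ} (hmn : m < n)
    (hs : s ∈ slotWindow ε m) (ht : t ∈ slotWindow ε n) : s ≤ t := by
  have : (m : ℝ) + 1 ≤ n := by exact_mod_cast hmn
  nlinarith [hs.2, ht.1]

lemma abs_sub_lt_iff_of_mem_slotWindow (hε : 0 < ε) {m n : ℕ} {s t : ℝ}
    (hs : s ∈ slotWindow ε m) (ht : t ∈ slotWindow ε n) : |s - t| < ε ↔ m = n := by
  obtain ⟨hs₁, hs₂⟩ := hs
  obtain ⟨ht₁, ht₂⟩ := ht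
  refine ⟨fun h => ?_, fun h => ?_⟩
  · rw [abs_sub_lt_iff] at h
    by_contra hmn
    rcases Nat.lt_or_gt_of_ne hmn with hmn | hmn
    · have : (m : ℝ) + 1 ≤ n := by exact_mod_cast hmn
      nlinarith
    · have : (n : ℝ) + 1 ≤ m := by exact_mod_cast hmn
      nlinarith
  · subst h
    rw [abs_sub_lt_iff]
    constructor <;> linarith

end slotWindow

/-- The market (index `0`) comes last, the new bank `K + 1` shares the slot of bank `1`, and banks
`1, …, K` get slots of their own. -/
def stressSlot (K : ℕ) (k : Fin (K + 2)) : ℕ :=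
  if k.val = 0 then K + 1 else if k.val = K + 1 then 1 else k.val

section stressSlot

variable {K : ℕ}

lemma stressSlot_lt_stressSlot_zero (hK : 0 < K) {k : Fin (K + 2)} (hk : k ≠ 0) :
    stressSlot K k < stressSlot K 0 := by
  have hk' : k.val ≠ 0 := Fin.val_ne_zero_iff.mpr hk
  have := k.isLt
  simp only [stressSlot, hk', if_false, Fin.val_zero, if_true]
  split <;> omega

lemma stressSlot_succ_castSucc (i : Fin K) : stressSlot K i.succ.castSucc = i.val + 1 := by
  have := i.isLt
  simp only [stressSlot, Fin.val_castSucc, Fin.val_succ]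
  rw [if_neg (by omega), if_neg (by omega)]

lemma stressSlot_last_succ :
    stressSlot K (Fin.last K).succ = stressSlot K (0 : Fin (K + 1)).succ := by
  simp [stressSlot]

variable {ε : ℝ} {η : Fin (K + 2) → ℝ}

lemma min_eq_of_mem_slotWindow (hK : 0 < K) (hε : 0 ≤ ε)
    (hη : ∀ k, η k ∈ slotWindow ε (stressSlot K k)) {k : Fin (K + 2)} (hk : k ≠ 0) :
    min (η 0) (η k) = η k :=
  min_eq_right <|
    le_of_mem_slotWindow_of_lt hε (stressSlot_lt_stressSlot_zero hK hk) (hη k) (hη 0)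

lemma not_isMarketFailure_of_mem_slotWindow (hK : 0 < K) (hε : 0 < ε)
    (hη : ∀ k, η k ∈ slotWindow ε (stressSlot K k)) :
    ¬ IsMarketFailure (fun i : Fin K => min (η 0) (η i.succ.castSucc)) ε := by
  rintro ⟨i, j, hij, h⟩
  dsimp only at h
  rw [min_eq_of_mem_slotWindow hK hε.le hη (Fin.castSucc_ne_zero_iff.mpr i.succ_ne_zero),
    min_eq_of_mem_slotWindow hK hε.le hη (Fin.castSucc_ne_zero_iff.mpr j.succ_ne_zero),
    abs_sub_lt_iff_of_mem_slotWindow hε (hη _) (hη _), stressSlot_succ_castSucc,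
    stressSlot_succ_castSucc] at h
  exact hij (Fin.ext (by omega))

lemma isMarketFailure_of_mem_slotWindow (hK : 0 < K) (hε : 0 < ε)
    (hη : ∀ k, η k ∈ slotWindow ε (stressSlot K k)) :
    IsMarketFailure (fun i : Fin (K + 1) => min (η 0) (η i.succ)) ε := by
  refine ⟨Fin.last K, 0, Fin.ext_iff.not.mpr (by simp [hK.ne']), ?_⟩
  dsimp only
  rw [min_eq_of_mem_slotWindow hK hε.le hη (Fin.succ_ne_zero _),
    min_eq_of_mem_slotWindow hK hε.le hη (Fin.succ_ne_zero _),
    abs_sub_lt_iff_of_mem_slotWindow hε (hη _) (hη _)]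
  exact stressSlot_last_succ

end stressSlot

theorem adding_gsib_increases_market_failure_probability_general
    {Ω : Type*} [MeasurableSpace Ω] (P : Measure Ω) [IsProbabilityMeasure P]
    (K : ℕ) (hK : 0 < K) (Z : Fin (K + 2) → Ω → ℝ) (α : Fin (K + 2) → ℝ → ℝ)
    (hZmeas : ∀ i, Measurable (Z i))
    (hZindep : iIndepFun Z P)
    (hZexp : ∀ i, ∀ t : ℝ, 0 ≤ t → P {ω | t < Z i ω} = ENNReal.ofReal (Real.exp (-t)))
    (hαpos : ∀ i t, 0 ≤ t → 0 < α i t)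
    (hαcont : ∀ i, ContinuousOn (α i) (Set.Ici 0))
    (ε : ℝ) (hε : 0 < ε) :
    P {ω | ∃ i j : Fin K, i ≠ j ∧
        |min (hitTime (α 0) (Z 0 ω)) (hitTime (α i.succ.castSucc) (Z i.succ.castSucc ω))
          - min (hitTime (α 0) (Z 0 ω)) (hitTime (α j.succ.castSucc) (Z j.succ.castSucc ω))| < ε}
      < P {ω | ∃ i j : Fin (K + 1), i ≠ j ∧
          |min (hitTime (α 0) (Z 0 ω)) (hitTime (α i.succ) (Z i.succ ω))
            - min (hitTime (α 0) (Z 0 ω)) (hitTime (α j.succ) (Z j.succ ω))| < ε} := by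
  set η : Ω → Fin (K + 2) → ℝ := fun ω k => hitTime (α k) (Z k ω)
  set SA := {ω | IsMarketFailure (fun i : Fin K => min (η ω 0) (η ω i.succ.castSucc)) ε}
  set SB := {ω | IsMarketFailure (fun i : Fin (K + 1) => min (η ω 0) (η ω i.succ)) ε}
  change P SA < P SB
  have hA : ∀ k, StrictMonoOn (cumHaz (α k)) (Ici 0) := fun k =>
    cumHaz_strictMonoOn (hαcont k) (hαpos k)
  have hlo : ∀ k, 0 ≤ 2 * (stressSlot K k : ℝ) * ε := fun k => by positivity
  set C := ⋂ k, Z k ⁻¹' Ioc (cumHaz (α k) (2 * stressSlot K k * ε))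
    (cumHaz (α k) (2 * stressSlot K k * ε + ε / 2))
  have hC : P C ≠ 0 := hZindep.measure_iInter_preimage_ne_zero (fun _ => measurableSet_Ioc)
    fun k => measure_preimage_Ioc_ne_zero_of_exp_tail (hZexp k) (cumHaz_nonneg (hαpos k) (hlo k))
      (hA k (hlo k) (mem_Ici.mpr (by linarith [hlo k])) (by linarith))
  have hη : ∀ ω ∈ C, ∀ k, η ω k ∈ slotWindow ε (stressSlot K k) := fun ω hω k =>
    hitTime_mem_Icc (hA k).monotoneOn (hlo k) (by linarith) (mem_iInter.mp hω k)
  have hAC : Disjoint SA C := disjoint_left.mpr fun ω hA hωC =>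
    not_isMarketFailure_of_mem_slotWindow hK hε (hη ω hωC) hA
  have hAB : SA ⊆ SB := fun ω hA => IsMarketFailure.of_comp (Fin.castSucc_injective _)
    (by simpa only [SA, mem_ofPred_eq, Function.comp_def, Fin.succ_castSucc] using hA)
  have hCB : C ⊆ SB := fun ω hωC => isMarketFailure_of_mem_slotWindow hK hε (hη ω hωC)
  calc P SA < P SA + P C := ENNReal.lt_add_right (measure_ne_top P _) hC
    _ = P (SA ∪ C) := (measure_union hAC (MeasurableSet.iInter fun k =>
        hZmeas k measurableSet_Ioc)).symm
    _ ≤ P SB := measure_mono (union_subset hAB hCB)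

/-- (Increasing the number of G-SIBs increases the market failure probability.)
With `K+1` banks `τ_1, …, τ_{K+1}` (and fixed intensities `α_0, α_1, …, α_{K+1}`), the probability
of a market failure among the first `K` banks is strictly smaller than the probability of a
market failure among all `K+1` banks. Banks `1, …, K` are indexed by `i : Fin K` via
`i.succ.castSucc : Fin (K+2)` and banks `1, …, K+1` by `i : Fin (K+1)` via `i.succ`. -/
theorem adding_gsib_increases_market_failure_probability
    {Ω : Type*} [MeasurableSpace Ω] (P : Measure Ω) [IsProbabilityMeasure P]
    (K : ℕ) (hK : 0 < K) (Z : Fin (K + 2) → Ω → ℝ) (α : Fin (K + 2) → ℝ → ℝ)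
    (hZmeas : ∀ i, Measurable (Z i))
    (hZindep : iIndepFun Z P)
    (hZexp : ∀ i, ∀ t : ℝ, 0 ≤ t → P {ω | t < Z i ω} = ENNReal.ofReal (Real.exp (-t)))
    (hαpos : ∀ i t, 0 ≤ t → 0 < α i t)
    (hαcont : ∀ i, ContinuousOn (α i) (Set.Ici 0))
    (hAinf : ∀ i, Filter.Tendsto (cumHaz (α i)) Filter.atTop Filter.atTop)
    (ε : ℝ) (hε : 0 < ε) :
    P {ω | ∃ i j : Fin K, i ≠ j ∧
        |min (hitTime (α 0) (Z 0 ω)) (hitTime (α i.succ.castSucc) (Z i.succ.castSucc ω))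
          - min (hitTime (α 0) (Z 0 ω)) (hitTime (α j.succ.castSucc) (Z j.succ.castSucc ω))| < ε}
      < P {ω | ∃ i j : Fin (K + 1), i ≠ j ∧
          |min (hitTime (α 0) (Z 0 ω)) (hitTime (α i.succ) (Z i.succ ω))
            - min (hitTime (α 0) (Z 0 ω)) (hitTime (α j.succ) (Z j.succ ω))| < ε} :=
  adding_gsib_increases_market_failure_probability_general P K hK Z α hZmeas hZindep hZexp hαpos
    hαcont ε hε
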